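/- arXiv:2501.14281 — 2 statements merged into one kernel-verified Lean document; each statement's English description precedes it below -/
import Mathlib

section
/- Let d ∈ ℕ, s := s(n,d), and let y* = (y*_α)_{α ∈ ℕ^n_{2d}} be a real sequence whose pseudo-moment matrix M_d(y*) is symmetric positive semidefinite with spectral decomposition M_d(y*) = P E Pᵀ, where P is an orthogonal matrix whose columns p_1,…,p_s are interpreted as coefficient vectors of polynomials p_1,…,p_s of degree at most d, and E is the diagonal matrix of eigenvalues e_1 ≥ ⋯ ≥ e_s ≥ 0. Let r be the number of zero eigenvalues and let β > 0. Then the Riesz functional of y* applied to the regularized Christoffel polynomial Λ̃_d^{y*} := Σ_{i=1}^{s} p_i²/(e_i + β) satisfies L_{y*}(Λ̃_d^{y*}) = Σ_{i=1}^{s−r} e_i/(e_i + β). -/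
open Matrix MvPolynomial

/-- The index set `ℕ^n_e` of multi-indices `α ∈ ℕ^n` with `|α| ≤ e`, as a finite type. -/
abbrev momIdx (n e : ℕ) := {α : Fin n → Fin (e + 1) // ∑ i, (α i : ℕ) ≤ e}

/-- The monomial `x^α` attached to an index `α ∈ ℕ^n_e`. -/
noncomputable def momMono {n e : ℕ} (a : momIdx n e) : MvPolynomial (Fin n) ℝ :=
  MvPolynomial.monomial (Finsupp.equivFunOnFinite.symm fun i => ((a.1 i : ℕ))) 1

/-- The Riesz functional `L_y` of a sequence `y`: `q = Σ_α q_α x^α ↦ Σ_α q_α y_α`. -/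
noncomputable def riesz {n : ℕ} (y : (Fin n → ℕ) → ℝ)
    (q : MvPolynomial (Fin n) ℝ) : ℝ :=
  ∑ α ∈ q.support, q.coeff α * y (fun i => α i)

/-!
For a coefficient vector `u` put `p_u = Σ_a u_a x^a`. Since `x^a x^b = x^(a+b)`, linearity of
`L_y` gives `L_y(p_u p_v) = uᵀ M_d(y) v`. For the column `p_i` of `P` this is
`(Pᵀ M_d(y) P)_{ii} = e_i` by orthogonality, so `L_y(Λ̃_d^y) = Σ_i e_i / (e_i + β)`, where the
terms with `e_i = 0` vanish.
-/

section Riesz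

variable {n : ℕ} (y : (Fin n → ℕ) → ℝ)

lemma riesz_eq_sum_of_support_subset (q : MvPolynomial (Fin n) ℝ) {s : Finset (Fin n →₀ ℕ)}
    (hs : q.support ⊆ s) : riesz y q = ∑ α ∈ s, q.coeff α * y α :=
  Finset.sum_subset hs fun α _ hα => by rw [notMem_support_iff.mp hα, zero_mul]

lemma riesz_add (p q : MvPolynomial (Fin n) ℝ) : riesz y (p + q) = riesz y p + riesz y q := by
  rw [riesz_eq_sum_of_support_subset y _ support_add,
    riesz_eq_sum_of_support_subset y p Finset.subset_union_left,
    riesz_eq_sum_of_support_subset y q Finset.subset_union_right, ← Finset.sum_add_distrib]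
  simp only [coeff_add, add_mul]

lemma riesz_smul (c : ℝ) (q : MvPolynomial (Fin n) ℝ) : riesz y (c • q) = c * riesz y q := by
  rw [riesz_eq_sum_of_support_subset y _ support_smul, riesz, Finset.mul_sum]
  simp only [coeff_smul, smul_eq_mul, mul_assoc]

noncomputable def rieszₗ : MvPolynomial (Fin n) ℝ →ₗ[ℝ] ℝ where
  toFun := riesz y
  map_add' := riesz_add y
  map_smul' := riesz_smul y

lemma rieszₗ_apply (q : MvPolynomial (Fin n) ℝ) : rieszₗ y q = riesz y q := rfl

lemma riesz_monomial (m : Fin n →₀ ℕ) (c : ℝ) : riesz y (monomial m c) = c * y m := by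
  rcases eq_or_ne c 0 with rfl | hc
  · simp [riesz]
  · simp [riesz, support_monomial, hc]

lemma riesz_momMono_mul {d : ℕ} (a b : momIdx n d) :
    riesz y (momMono a * momMono b) = y (fun i => (a.1 i : ℕ) + (b.1 i : ℕ)) := by
  rw [momMono, momMono, monomial_mul, one_mul, riesz_monomial, one_mul]
  rfl

end Riesz

noncomputable def vecPoly {n d : ℕ} (u : momIdx n d → ℝ) : MvPolynomial (Fin n) ℝ :=
  ∑ a, C (u a) * momMono a

lemma riesz_vecPoly_mul {n d : ℕ} {y : (Fin n → ℕ) → ℝ}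
    {M : Matrix (momIdx n d) (momIdx n d) ℝ}
    (hM : ∀ a b : momIdx n d, M a b = y (fun i => (a.1 i : ℕ) + (b.1 i : ℕ)))
    (u v : momIdx n d → ℝ) : riesz y (vecPoly u * vecPoly v) = u ⬝ᵥ (M *ᵥ v) := by
  have hprod : vecPoly u * vecPoly v = ∑ a, ∑ b, (u a * v b) • (momMono a * momMono b) := by
    simp only [vecPoly, Finset.sum_mul_sum, C_mul']
    refine Finset.sum_congr rfl fun a _ => Finset.sum_congr rfl fun b _ => ?_
    rw [smul_mul_smul_comm]
  rw [← rieszₗ_apply, hprod]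
  simp only [map_sum, map_smul, rieszₗ_apply, riesz_momMono_mul, ← hM, smul_eq_mul,
    dotProduct, mulVec, Finset.mul_sum]
  exact Finset.sum_congr rfl fun a _ => Finset.sum_congr rfl fun b _ => by ring

lemma Matrix.transpose_mul_mul_eq_of_orthogonal {ι R : Type*} [Fintype ι] [DecidableEq ι]
    [Semiring R] {P : Matrix ι ι R} (hP : Pᵀ * P = 1) (D : Matrix ι ι R) :
    Pᵀ * (P * D * Pᵀ) * P = D := by
  rw [Matrix.mul_assoc, Matrix.mul_assoc, hP, Matrix.mul_one, ← Matrix.mul_assoc, hP,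
    Matrix.one_mul]

theorem stmt_10_general {n d : ℕ} (β : ℝ)
    (y : (Fin n → ℕ) → ℝ)
    (M : Matrix (momIdx n d) (momIdx n d) ℝ)
    (hM : ∀ a b : momIdx n d, M a b = y (fun i => (a.1 i : ℕ) + (b.1 i : ℕ)))
    (P : Matrix (momIdx n d) (momIdx n d) ℝ) (e : momIdx n d → ℝ)
    (hP : Pᵀ * P = 1) (hspec : M = P * Matrix.diagonal e * Pᵀ)
    (r : ℕ) (hr : r = (Finset.univ.filter fun i : momIdx n d => e i = 0).card) :
    riesz y (∑ i : momIdx n d, MvPolynomial.C (1 / (e i + β)) *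
        (∑ a : momIdx n d, MvPolynomial.C (P a i) * momMono a) ^ 2) =
      ∑ i ∈ Finset.univ.filter (fun i : momIdx n d => e i ≠ 0), e i / (e i + β) ∧
    (Finset.univ.filter fun i : momIdx n d => e i ≠ 0).card =
      Fintype.card (momIdx n d) - r := by
  have hterm (i : momIdx n d) : riesz y (C (1 / (e i + β)) * vecPoly (Pᵀ i) ^ 2) =
      e i / (e i + β) := by
    rw [C_mul', riesz_smul, sq, riesz_vecPoly_mul hM, ← mul_mul_apply, hspec,
      transpose_mul_mul_eq_of_orthogonal hP, diagonal_apply_eq, one_div_mul_eq_div]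
  constructor
  · rw [← rieszₗ_apply, map_sum, Finset.sum_filter_of_ne (f := fun i => e i / (e i + β))
      fun i _ hi hei => by simp [hei] at hi]
    exact Finset.sum_congr rfl fun i _ => hterm i
  · have hcard := Finset.card_filter_add_card_filter_not (s := Finset.univ) (p := fun i => e i = 0)
    simp only [Finset.card_univ, ne_eq] at hcard ⊢
    omega

/-- Let `y*` be a real sequence whose pseudo-moment matrix `M_d(y*)` is
symmetric positive semidefinite with spectral decomposition `M_d(y*) = P E Pᵀ`, where `P`
is orthogonal with columns interpreted as coefficient vectors of polynomials `p_i` of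
degree at most `d`, and `E = diag(e)` with eigenvalues `e_i ≥ 0`, of which `r` vanish.
For `β > 0`, the Riesz functional of `y*` applied to the regularized Christoffel
polynomial `Λ̃_d^{y*} := Σ_i p_i²/(e_i + β)` satisfies
`L_{y*}(Λ̃_d^{y*}) = Σ_{i : e_i ≠ 0} e_i/(e_i + β)` — a sum over the `s − r` nonzero
eigenvalues. -/
theorem stmt_10 {n d : ℕ} (β : ℝ) (hβ : 0 < β)
    (y : (Fin n → ℕ) → ℝ)
    (M : Matrix (momIdx n d) (momIdx n d) ℝ)
    (hM : ∀ a b : momIdx n d, M a b = y (fun i => (a.1 i : ℕ) + (b.1 i : ℕ)))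
    (hMpsd : M.PosSemidef)
    (P : Matrix (momIdx n d) (momIdx n d) ℝ) (e : momIdx n d → ℝ)
    (hP : Pᵀ * P = 1) (hspec : M = P * Matrix.diagonal e * Pᵀ)
    (he : ∀ i, 0 ≤ e i)
    (r : ℕ) (hr : r = (Finset.univ.filter fun i : momIdx n d => e i = 0).card) :
    riesz y (∑ i : momIdx n d, MvPolynomial.C (1 / (e i + β)) *
        (∑ a : momIdx n d, MvPolynomial.C (P a i) * momMono a) ^ 2) =
      ∑ i ∈ Finset.univ.filter (fun i : momIdx n d => e i ≠ 0), e i / (e i + β) ∧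
    (Finset.univ.filter fun i : momIdx n d => e i ≠ 0).card =
      Fintype.card (momIdx n d) - r :=
  stmt_10_general β y M hM P e hP hspec r hr
end

section
/- Let y* = (y*_α)_{α ∈ ℕ^n_2} with y*_0 = 1 be such that the matrix M_1(y*) ∈ S_+^{n+1} is invertible (hence positive definite), and define x̂ := (L_{y*}(x_1), …, L_{y*}(x_n)) ∈ ℝ^n. Then the Christoffel polynomial Λ_1^{y*}(x) := v_1(x)ᵀ M_1(y*)^{-1} v_1(x), where v_1(x) = (1, x_1, …, x_n), satisfies min_{x ∈ ℝ^n} Λ_1^{y*}(x) = 1 and the minimum is attained at x̂, i.e., Λ_1^{y*}(x̂) = 1 and Λ_1^{y*}(x) ≥ 1 for all x ∈ ℝ^n. -/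
open Matrix

/-! The first column of `M_1(y*)` is `v_1(x̂)` itself, i.e. `M_1(y*) e₀ = v_1(x̂)`, so
`M_1(y*)⁻¹ v_1(x̂) = e₀`. Hence `Λ_1(x̂) = ⟨v_1(x̂), e₀⟩ = 1`, and for every `x` the bilinear
form of `M_1(y*)⁻¹` pairs `v_1(x)` with `v_1(x̂)` to `⟨v_1(x), e₀⟩ = 1`. Positivity of that form
on `v_1(x) - v_1(x̂)` then gives `Λ_1(x) - 2 + 1 ≥ 0`. -/

/-- The multi-index in `ℕ^n_1` attached to `a : Fin (n+1)`: the zero multi-index for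
`a = 0`, and the `i`-th unit multi-index (the exponent of the monomial `x_i`) for
`a = i.succ`.  With this indexing, `M_1(y)(a, b) = y_{α(a) + α(b)}`. -/
def unitIdx {n : ℕ} (a : Fin (n + 1)) : Fin n → ℕ :=
  fun i => if a = i.succ then 1 else 0

lemma Matrix.PosSemidef.two_mul_dotProduct_mulVec_sub_le {ι : Type*} [Fintype ι]
    {A : Matrix ι ι ℝ} (hA : A.PosSemidef) (u v : ι → ℝ) :
    2 * (u ⬝ᵥ A *ᵥ v) - v ⬝ᵥ A *ᵥ v ≤ u ⬝ᵥ A *ᵥ u := by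
  have hsymm : v ⬝ᵥ A *ᵥ u = u ⬝ᵥ A *ᵥ v := by
    rw [dotProduct_mulVec, ← mulVec_transpose, dotProduct_comm,
      ← conjTranspose_eq_transpose_of_trivial, hA.isHermitian.eq]
  have hnonneg := hA.dotProduct_mulVec_nonneg (u - v)
  rw [star_trivial, mulVec_sub, sub_dotProduct, dotProduct_sub, dotProduct_sub, hsymm] at hnonneg
  linarith

lemma Matrix.inv_mulVec_col {ι R : Type*} [Fintype ι] [DecidableEq ι] [CommRing R]
    {M : Matrix ι ι R} (hM : IsUnit M.det) (j : ι) :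
    M⁻¹ *ᵥ M.col j = Pi.single j 1 := by
  rw [← mulVec_single_one, mulVec_mulVec, nonsing_inv_mul M hM, one_mulVec]

lemma unitIdx_zero {n : ℕ} : unitIdx (0 : Fin (n + 1)) = fun _ => 0 := by
  funext i
  simp [unitIdx, (Fin.succ_ne_zero i).symm]

lemma pseudoMoment_col_zero {n : ℕ} {y : (Fin n → ℕ) → ℝ} (hy0 : y (fun _ => 0) = 1)
    {M : Matrix (Fin (n + 1)) (Fin (n + 1)) ℝ}
    (hM : ∀ a b, M a b = y (fun i => unitIdx a i + unitIdx b i)) :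
    M.col 0 = Fin.cons 1 (fun i : Fin n => y (unitIdx i.succ)) := by
  funext a
  rw [col_apply, hM]
  induction a using Fin.cases with
  | zero => simpa [unitIdx_zero] using hy0
  | succ j => simp [unitIdx_zero]

/-- Let `y*` (with `y*_0 = 1`) be such that the pseudo-moment matrix
`M_1(y*) ∈ S_+^{n+1}` is invertible (hence positive definite), and define
`x̂ := (L_{y*}(x_1), …, L_{y*}(x_n))`.  Then the first-order Christoffel polynomial
`Λ_1^{y*}(x) := v_1(x)ᵀ M_1(y*)⁻¹ v_1(x)`, with `v_1(x) = (1, x_1, …, x_n)`, satisfies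
`Λ_1^{y*}(x̂) = 1` and `Λ_1^{y*}(x) ≥ 1` for all `x ∈ ℝ^n`; that is,
`min_{x ∈ ℝ^n} Λ_1^{y*}(x) = 1`, attained at `x̂`. -/
theorem stmt_11 {n : ℕ} (y : (Fin n → ℕ) → ℝ)
    (hy0 : y (fun _ => 0) = 1)
    (M : Matrix (Fin (n + 1)) (Fin (n + 1)) ℝ)
    (hM : ∀ a b, M a b = y (fun i => unitIdx a i + unitIdx b i))
    (hpsd : M.PosSemidef) (hinv : IsUnit M.det) :
    (Fin.cons 1 (fun i : Fin n => y (unitIdx i.succ)) ⬝ᵥ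
      (M⁻¹).mulVec (Fin.cons 1 fun i : Fin n => y (unitIdx i.succ))) = 1 ∧
    ∀ x : Fin n → ℝ,
      1 ≤ Fin.cons 1 x ⬝ᵥ (M⁻¹).mulVec (Fin.cons 1 x) := by
  set v : Fin (n + 1) → ℝ := Fin.cons 1 (fun i : Fin n => y (unitIdx i.succ))
  have hv : M⁻¹ *ᵥ v = Pi.single 0 1 := by
    rw [show v = M.col 0 from (pseudoMoment_col_zero hy0 hM).symm, inv_mulVec_col hinv]
  have hΛv : v ⬝ᵥ M⁻¹ *ᵥ v = 1 := by simp [hv, v]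
  refine ⟨hΛv, fun x => ?_⟩
  have hquad := hpsd.inv.two_mul_dotProduct_mulVec_sub_le (Fin.cons 1 x) v
  rw [hΛv, hv, dotProduct_single, Fin.cons_zero] at hquad
  linarith
end
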